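/- Let X and Y be real Fréchet spaces, T : X → Y a surjective continuous linear map, n a positive integer, f₁,…,fₙ continuous linear functionals on X, and λ₁,…,λₙ real numbers such that ker T ⊆ ⋂ₖ ker fₖ. Then there exist continuous linear functionals g₁,…,gₙ on Y with fₖ = gₖ ∘ T for each k, and for any such g₁,…,gₙ the image T({x ∈ X : fₖ(x) ≤ λₖ for all k}) equals {y ∈ Y : gₖ(y) ≤ λₖ for all k}; in particular this image is a closed polyhedron. -/

import Mathlib

/-!
Since `ker T ⊆ ker fₖ`, each `fₖ` factors linearly as `gₖ ∘ T`, and `gₖ` is continuous as soon as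
`T` is a quotient map. That is the open mapping theorem for F-spaces, proved by the classical
argument: Baire category in `Y` makes `closure (T '' V)` a neighbourhood of `0` for every
neighbourhood `V` of `0`, and completeness of `X` removes the closure, by summing a series of
successive corrections taken from a sequence of neighbourhoods `U (n + 1) + U (n + 1) ⊆ U n`.
The polyhedron of the `fₖ` is then the preimage under `T` of that of the `gₖ`, and `T` is onto.
-/

open Filter Topology Set Pointwise Uniformity

def IsClosedPolyhedron {X : Type*} [AddCommGroup X] [Module ℝ X] [TopologicalSpace X]
    (P : Set X) : Prop :=
  ∃ n : ℕ, 0 < n ∧ ∃ (f : Fin n → X →L[ℝ] ℝ) (lam : Fin n → ℝ),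
    P = {x : X | ∀ k, f k x ≤ lam k}

theorem Finset.sum_Ico_mem_of_add_subset {M : Type*} [AddCommMonoid M] {U : ℕ → Set M}
    (hU₀ : ∀ n, (0 : M) ∈ U n) (hadd : ∀ n, U (n + 1) + U (n + 1) ⊆ U n) {x : ℕ → M}
    (hx : ∀ n, x n ∈ U (n + 1)) (k l : ℕ) : ∑ i ∈ Finset.Ico k l, x i ∈ U k := by
  induction hd : l - k generalizing k with
  | zero => rw [Finset.Ico_eq_empty_of_le (by omega), Finset.sum_empty]; exact hU₀ k
  | succ d ih =>
    rw [Finset.sum_eq_sum_Ico_succ_bot (by omega)]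
    exact hadd k (Set.add_mem_add (hx k) (ih (k + 1) (by omega)))

theorem tendsto_closure_smallSets {X : Type*} [TopologicalSpace X] [RegularSpace X] (x : X) :
    Tendsto closure (𝓝 x).smallSets (𝓝 x).smallSets := by
  refine tendsto_smallSets_iff.2 fun t ht => ?_
  obtain ⟨t', ht', ht'c, ht't⟩ := exists_mem_nhds_isClosed_subset ht
  filter_upwards [eventually_smallSets_subset.2 ht'] with s hs
  exact (closure_minimal hs ht'c).trans ht't

section TopologicalAddGroup

variable {G : Type*} [AddCommGroup G] [TopologicalSpace G] [IsTopologicalAddGroup G]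

theorem exists_hasAntitoneBasis_nhds_zero_add_subset [FirstCountableTopology G] {V : Set G}
    (hV : V ∈ 𝓝 (0 : G)) :
    ∃ U : ℕ → Set G, (𝓝 (0 : G)).HasAntitoneBasis U ∧ (∀ n, IsClosed (U n)) ∧ U 0 ⊆ V ∧
      ∀ n, U (n + 1) + U (n + 1) ⊆ U n := by
  obtain ⟨b, hb⟩ := (𝓝 (0 : G)).exists_antitone_basis
  have half : ∀ s ∈ 𝓝 (0 : G), ∃ t ∈ 𝓝 (0 : G), IsClosed t ∧ t + t ⊆ s := by
    intro s hs
    obtain ⟨W, hW, hWs⟩ := exists_nhds_zero_half hs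
    obtain ⟨t, ht, htc, htW⟩ := exists_mem_nhds_isClosed_subset hW
    exact ⟨t, ht, htc, Set.add_subset_iff.2 fun a ha b hb => hWs a (htW ha) b (htW hb)⟩
  choose! half hhalf_mem hhalf_closed hhalf_add using half
  -- intersecting with `b n` at each step makes `U` a basis
  let U : ℕ → Set G := fun n => Nat.rec (half V) (fun n s => half (s ∩ b n)) n
  have hU : ∀ n, U n ∈ 𝓝 (0 : G) := by
    intro n
    induction n with
    | zero => exact hhalf_mem V hV
    | succ n ih => exact hhalf_mem _ (inter_mem ih (hb.mem n))
  have hUadd : ∀ n, U (n + 1) + U (n + 1) ⊆ U n ∩ b n := fun n =>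
    hhalf_add _ (inter_mem (hU n) (hb.mem n))
  have hsub : ∀ {s t : Set G}, s ∈ 𝓝 (0 : G) → s + s ⊆ t → s ⊆ t := fun hs hst =>
    (Set.subset_add_left _ (mem_of_mem_nhds hs)).trans hst
  refine ⟨U, ⟨⟨fun s => ?_⟩, antitone_nat_of_succ_le fun n =>
    (hsub (hU (n + 1)) (hUadd n)).trans inter_subset_left⟩, ?_, hsub (hU 0) (hhalf_add V hV),
    fun n => (hUadd n).trans inter_subset_left⟩
  · refine ⟨fun hs => ?_, fun ⟨n, _, hn⟩ => mem_of_superset (hU n) hn⟩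
    obtain ⟨m, hm⟩ := hb.mem_iff.1 hs
    exact ⟨m + 1, trivial, ((hsub (hU (m + 1)) (hUadd m)).trans inter_subset_right).trans hm⟩
  · intro n
    cases n with
    | zero => exact hhalf_closed V hV
    | succ n => exact hhalf_closed _ (inter_mem (hU n) (hb.mem n))

theorem exists_sub_mem_of_mem_closure {s B : Set G} {y : G} (hy : y ∈ closure s)
    (hB : B ∈ 𝓝 (0 : G)) : ∃ z ∈ s, y - z ∈ B := by
  obtain ⟨z, hz, hzB⟩ := mem_closure_iff_nhds_zero.1 hy _ (neg_mem_nhds_zero G hB)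
  exact ⟨z, hz, by simpa [Set.mem_neg] using hzB⟩

theorem isOpenMap_of_image_mem_nhds_zero {H F : Type*} [AddCommGroup H] [TopologicalSpace H]
    [IsTopologicalAddGroup H] [FunLike F G H] [AddMonoidHomClass F G H] (T : F)
    (h : ∀ V ∈ 𝓝 (0 : G), T '' V ∈ 𝓝 (0 : H)) : IsOpenMap T := by
  refine isOpenMap_iff_nhds_le.2 fun x => ?_
  calc 𝓝 (T x) = map (T x + ·) (𝓝 0) := (map_add_left_nhds_zero _).symm
    _ ≤ map (T x + ·) (map T (𝓝 0)) := map_mono (le_map_iff.2 h)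
    _ = map T (map (x + ·) (𝓝 0)) := by simp only [map_map, Function.comp_def, map_add]
    _ = map T (𝓝 x) := by rw [map_add_left_nhds_zero]

end TopologicalAddGroup

theorem exists_mem_tendsto_sum_range_of_add_subset {G : Type*} [AddCommGroup G] [UniformSpace G]
    [IsUniformAddGroup G] [CompleteSpace G] {U : ℕ → Set G} (hU : (𝓝 (0 : G)).HasAntitoneBasis U)
    (hU₀ : IsClosed (U 0)) (hadd : ∀ n, U (n + 1) + U (n + 1) ⊆ U n) {x : ℕ → G}
    (hx : ∀ n, x n ∈ U (n + 1)) :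
    ∃ s ∈ U 0, Tendsto (fun n => ∑ i ∈ Finset.range n, x i) atTop (𝓝 s) := by
  have hIco := Finset.sum_Ico_mem_of_add_subset (fun n => mem_of_mem_nhds (hU.mem n)) hadd hx
  have hcauchy : CauchySeq fun n => ∑ i ∈ Finset.range n, x i :=
    hU.1.uniformity_of_nhds_zero_swapped.cauchySeq_iff'.2 fun N _ =>
      ⟨N, fun n hn => show _ - _ ∈ U N from Finset.sum_Ico_eq_sub x hn ▸ hIco N n⟩
  obtain ⟨s, hs⟩ := cauchySeq_tendsto_of_complete hcauchy
  refine ⟨s, hU₀.mem_of_tendsto hs (Eventually.of_forall fun n => ?_), hs⟩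
  simpa using hIco 0 n

theorem closure_image_mem_nhds_zero_of_baireSpace {𝕜 X Y : Type*} [NontriviallyNormedField 𝕜]
    [AddCommGroup X] [Module 𝕜 X] [TopologicalSpace X] [IsTopologicalAddGroup X]
    [ContinuousSMul 𝕜 X] [AddCommGroup Y] [Module 𝕜 Y] [TopologicalSpace Y]
    [IsTopologicalAddGroup Y] [ContinuousConstSMul 𝕜 Y] [BaireSpace Y]
    (T : X →ₗ[𝕜] Y) (hT : Function.Surjective T) {V : Set X} (hV : V ∈ 𝓝 (0 : X)) :
    closure (T '' V) ∈ 𝓝 (0 : Y) := by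
  obtain ⟨W, hW, hWV⟩ := exists_nhds_half_neg hV
  set C := closure (T '' W)
  obtain ⟨c, hc⟩ := NormedField.exists_one_lt_norm 𝕜
  have hc₀ : c ≠ 0 := norm_pos_iff.1 (one_pos.trans hc)
  have hcover : ⋃ n : ℕ, c ^ n • C = univ := by
    refine eq_univ_of_forall fun y => ?_
    obtain ⟨x, rfl⟩ := hT y
    obtain ⟨r, -, hr⟩ := ((absorbent_nhds_zero (𝕜 := 𝕜) hW).absorbs (x := x)).exists_pos
    obtain ⟨n, hn⟩ := pow_unbounded_of_one_lt r hc
    obtain ⟨w, hw, rfl⟩ := hr (c ^ n) (by rw [norm_pow]; exact hn.le) rfl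
    rw [mem_iUnion, map_smul]
    exact ⟨n, smul_mem_smul_set (subset_closure (mem_image_of_mem T hw))⟩
  obtain ⟨n, hn⟩ := nonempty_interior_of_iUnion_of_closed
    (fun n => (isClosedMap_smul_of_ne_zero (pow_ne_zero n hc₀)) C isClosed_closure) hcover
  obtain ⟨z, hz⟩ := smul_set_nonempty.1 (interior_smul₀ (pow_ne_zero n hc₀) C ▸ hn)
  -- `u = (z + u) - z` with `z + u` and `z` in `C = closure (T '' W)`, and `W - W ⊆ V`.
  have hzC : C ∈ 𝓝 z := mem_interior_iff_mem_nhds.1 hz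
  rw [← map_add_left_nhds_zero] at hzC
  filter_upwards [hzC] with u hu
  simpa using map_mem_closure₂ continuous_sub hu (interior_subset hz) fun a ha b hb => by
    obtain ⟨a, ha, rfl⟩ := ha
    obtain ⟨b, hb, rfl⟩ := hb
    exact ⟨a - b, hWV a ha b hb, map_sub T a b⟩

theorem image_mem_nhds_zero_of_closure_image_mem {X Y F : Type*} [AddCommGroup X] [UniformSpace X]
    [IsUniformAddGroup X] [CompleteSpace X] [FirstCountableTopology X] [AddCommGroup Y]
    [TopologicalSpace Y] [IsTopologicalAddGroup Y] [T2Space Y] [FunLike F X Y]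
    [AddMonoidHomClass F X Y] (T : F) (hT : Continuous T)
    (hcl : ∀ V ∈ 𝓝 (0 : X), closure (T '' V) ∈ 𝓝 (0 : Y)) {V : Set X} (hV : V ∈ 𝓝 (0 : X)) :
    T '' V ∈ 𝓝 (0 : Y) := by
  obtain ⟨U, hU, hUc, hUV, hUadd⟩ := exists_hasAntitoneBasis_nhds_zero_add_subset hV
  refine mem_of_superset (hcl _ (hU.mem 1)) fun y hy => ?_
  choose! xf hxfU hxf using fun n (z : Y) (hz : z ∈ closure (T '' U (n + 1))) =>
    exists_sub_mem_of_mem_closure hz (hcl _ (hU.mem (n + 2)))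
  -- Successive approximation: `r n` is what is left of `y` after `n` corrections.
  let r : ℕ → Y := fun n => Nat.rec y (fun n z => z - xf n z) n
  have hr : ∀ n, r n ∈ closure (T '' U (n + 1)) := by
    intro n
    induction n with
    | zero => exact hy
    | succ n ih => exact hxf n _ ih
  choose x hxU hx using fun n => hxfU n (r n) (hr n)
  have hrx : ∀ n, r n = y - T (∑ i ∈ Finset.range n, x i) := by
    intro n
    induction n with
    | zero => simp [r]
    | succ n ih =>
      rw [Finset.sum_range_succ, map_add, sub_add_eq_sub_sub, ← ih, hx n]
  obtain ⟨s, hsU, hs⟩ := exists_mem_tendsto_sum_range_of_add_subset hU (hUc 0) hUadd hxU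
  have hr₀ : Tendsto r atTop (𝓝 0) := by
    have hsmall := (tendsto_closure_smallSets (0 : Y)).comp
      ((map_zero T ▸ hT.tendsto 0).image_smallSets.comp hU.tendsto_smallSets)
    exact (hsmall.comp (tendsto_add_atTop_nat 1)).of_smallSets (Eventually.of_forall hr)
  have hTs : Tendsto (fun n => T (∑ i ∈ Finset.range n, x i)) atTop (𝓝 y) := by
    simpa [hrx] using tendsto_const_nhds (x := y) |>.sub hr₀
  exact ⟨s, hUV hsU, tendsto_nhds_unique ((hT.tendsto s).comp hs) hTs⟩

theorem ContinuousLinearMap.isOpenMap_of_baireSpace {𝕜 X Y : Type*} [NontriviallyNormedField 𝕜]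
    [AddCommGroup X] [Module 𝕜 X] [UniformSpace X] [IsUniformAddGroup X] [ContinuousSMul 𝕜 X]
    [CompleteSpace X] [FirstCountableTopology X] [AddCommGroup Y] [Module 𝕜 Y]
    [TopologicalSpace Y] [IsTopologicalAddGroup Y] [ContinuousConstSMul 𝕜 Y] [BaireSpace Y]
    [T2Space Y] (T : X →L[𝕜] Y) (hT : Function.Surjective T) : IsOpenMap T :=
  isOpenMap_of_image_mem_nhds_zero T fun _ =>
    image_mem_nhds_zero_of_closure_image_mem T T.continuous fun _ =>
      closure_image_mem_nhds_zero_of_baireSpace (T : X →ₗ[𝕜] Y) hT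

theorem ContinuousLinearMap.exists_eq_comp_of_ker_le {R X Y Z : Type*} [Ring R] [AddCommGroup X]
    [Module R X] [TopologicalSpace X] [AddCommGroup Y] [Module R Y] [TopologicalSpace Y]
    [AddCommGroup Z] [Module R Z] [TopologicalSpace Z] (T : X →L[R] Y) (hT : IsQuotientMap T)
    (f : X →L[R] Z) (hf : LinearMap.ker (T : X →ₗ[R] Y) ≤ LinearMap.ker (f : X →ₗ[R] Z)) :
    ∃ g : Y →L[R] Z, f = g.comp T := by
  let g : Y →ₗ[R] Z := (LinearMap.ker (T : X →ₗ[R] Y)).liftQ f hf ∘ₗ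
    ((T : X →ₗ[R] Y).quotKerEquivOfSurjective hT.surjective).symm
  have hg : ∀ x, g (T x) = f x := fun x => by
    have h := (T : X →ₗ[R] Y).quotKerEquivOfSurjective_symm_apply hT.surjective x
    simp only [ContinuousLinearMap.coe_coe] at h
    simp [g, h]
  refine ⟨⟨g, hT.continuous_iff.2 ?_⟩, ContinuousLinearMap.ext fun x => (hg x).symm⟩
  show Continuous fun x => g (T x)
  simpa only [hg] using f.continuous

/-- If `T : X → Y` is a surjective continuous linear map between real Fréchet spaces,
`f₁,…,fₙ` are continuous linear functionals on `X` with `ker T ⊆ ⋂ₖ ker fₖ`, then each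
`fₖ` factors as `gₖ ∘ T` for some continuous linear functional `gₖ` on `Y`, for any such
`g` the image of `{x | ∀ k, fₖ x ≤ λₖ}` under `T` is `{y | ∀ k, gₖ y ≤ λₖ}`; in
particular this image is a closed polyhedron. -/
theorem image_closedPolyhedron_of_ker_le
    {X Y : Type*}
    [AddCommGroup X] [Module ℝ X] [UniformSpace X] [IsUniformAddGroup X]
    [ContinuousSMul ℝ X] [CompleteSpace X] [TopologicalSpace.MetrizableSpace X]
    [AddCommGroup Y] [Module ℝ Y] [UniformSpace Y] [IsUniformAddGroup Y]
    [ContinuousSMul ℝ Y] [CompleteSpace Y] [TopologicalSpace.MetrizableSpace Y]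
    (T : X →L[ℝ] Y) (hT : Function.Surjective T)
    (n : ℕ) (hn : 0 < n) (f : Fin n → X →L[ℝ] ℝ) (lam : Fin n → ℝ)
    (hker : (LinearMap.ker (T : X →ₗ[ℝ] Y) : Set X) ⊆ ⋂ k, (LinearMap.ker (f k : X →ₗ[ℝ] ℝ) : Set X)) :
    (∃ g : Fin n → Y →L[ℝ] ℝ, ∀ k, f k = (g k).comp T) ∧
      (∀ g : Fin n → Y →L[ℝ] ℝ, (∀ k, f k = (g k).comp T) →
        T '' {x : X | ∀ k, f k x ≤ lam k} = {y : Y | ∀ k, g k y ≤ lam k}) ∧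
      IsClosedPolyhedron (T '' {x : X | ∀ k, f k x ≤ lam k}) := by
  -- makes `Y` completely metrizable, hence a Baire space
  have : (𝓤 Y).IsCountablyGenerated := IsUniformAddGroup.uniformity_countably_generated
  have hq : IsQuotientMap T := (T.isOpenMap_of_baireSpace hT).isQuotientMap T.continuous hT
  choose g hg using fun k =>
    T.exists_eq_comp_of_ker_le hq (f k) fun _ hx => mem_iInter.1 (hker hx) k
  have himage : ∀ g : Fin n → Y →L[ℝ] ℝ, (∀ k, f k = (g k).comp T) →
      T '' {x : X | ∀ k, f k x ≤ lam k} = {y : Y | ∀ k, g k y ≤ lam k} := by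
    intro g hg
    simp_rw [hg]
    exact image_preimage_eq {y : Y | ∀ k, g k y ≤ lam k} hT
  exact ⟨⟨g, hg⟩, himage, n, hn, g, lam, himage g hg⟩
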